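/- arXiv:2508.18521 — 2 statements merged into one kernel-verified Lean document; each statement's English description precedes it below -/
import Mathlib

section
/- For every natural number C ≥ 1 and every odd prime q with q > C, there exist infinitely many primes p such that: (i) p ≡ 1 (mod 4); (ii) every integer z with 1 ≤ z ≤ C is a quadratic residue mod p; and (iii) q is a quadratic non-residue mod p. -/
/-!
Pick a non-square `b` modulo `q` and, by Dirichlet's theorem and the Chinese remainder theorem,
infinitely many primes `p` with `p ≡ 1 (mod 8 · C!)` and `p ≡ b (mod q)`. Then `2` is a square
mod `p` since `p ≡ 1 (mod 8)`, and since `p ≡ 1 (mod 4)`, quadratic reciprocity makes an odd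
prime `ℓ` a square mod `p` exactly when `p` is a square mod `ℓ`. This holds for every prime
`ℓ ≤ C` (`p ≡ 1 mod ℓ`), hence by multiplicativity for every `1 ≤ z ≤ C`, and fails for `q`
(`p ≡ b mod q`).
-/

open Nat

/-- An integer `z` is a quadratic residue mod a prime `p` if `p ∤ z` and
`z ≡ n²  (mod p)` for some integer `n`. -/
def IsQuadRes (p z : ℤ) : Prop := ¬ p ∣ z ∧ ∃ n : ℤ, z ≡ n ^ 2 [ZMOD p]

/-- An integer `z` is a quadratic non-residue mod a prime `p` if `p ∤ z` and
`z` is not congruent to a square mod `p`. -/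
def IsQuadNonRes (p z : ℤ) : Prop := ¬ p ∣ z ∧ ¬ ∃ n : ℤ, z ≡ n ^ 2 [ZMOD p]

theorem exists_intModEq_sq_iff_isSquare (m : ℕ) (z : ℤ) :
    (∃ n : ℤ, z ≡ n ^ 2 [ZMOD m]) ↔ IsSquare (z : ZMod m) := by
  simp_rw [← ZMod.intCast_eq_intCast_iff]
  constructor
  · rintro ⟨n, hn⟩
    exact ⟨n, by rw [hn]; push_cast; ring⟩
  · rintro ⟨r, hr⟩
    obtain ⟨n, rfl⟩ := ZMod.intCast_surjective r
    exact ⟨n, by rw [hr]; push_cast; ring⟩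

theorem isQuadRes_natCast_iff (p : ℕ) (z : ℤ) :
    IsQuadRes p z ↔ ¬ (p : ℤ) ∣ z ∧ IsSquare (z : ZMod p) := by
  rw [IsQuadRes, exists_intModEq_sq_iff_isSquare]

theorem isQuadNonRes_natCast_iff (p : ℕ) (z : ℤ) :
    IsQuadNonRes p z ↔ ¬ (p : ℤ) ∣ z ∧ ¬ IsSquare (z : ZMod p) := by
  rw [IsQuadNonRes, exists_intModEq_sq_iff_isSquare]

theorem isSquare_natCast_of_forall_prime_dvd {R : Type*} [CommSemiring R] {n : ℕ}
    (h : ∀ ℓ : ℕ, ℓ.Prime → ℓ ∣ n → IsSquare (ℓ : R)) : IsSquare (n : R) := by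
  induction n using induction_on_primes with
  | zero => exact_mod_cast IsSquare.zero
  | one => exact_mod_cast IsSquare.one
  | prime_mul p a hp ih =>
    rw [Nat.cast_mul]
    exact (h p hp (dvd_mul_right p a)).mul (ih fun ℓ hℓ hℓa => h ℓ hℓ (hℓa.mul_left p))

theorem ZMod.isSquare_natCast_of_modEq_one {p C n : ℕ} [Fact p.Prime]
    (hp : p ≡ 1 [MOD 8 * C !]) (hn : n ≤ C) : IsSquare (n : ZMod p) := by
  rcases n.eq_zero_or_pos with rfl | hn0
  · exact_mod_cast IsSquare.zero
  refine isSquare_natCast_of_forall_prime_dvd fun ℓ hℓ hℓn => ?_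
  have := Fact.mk hℓ
  have hpℓ : p ≡ 1 [MOD ℓ] :=
    hp.of_dvd (dvd_mul_of_dvd_right (dvd_factorial hℓ.pos ((le_of_dvd hn0 hℓn).trans hn)) 8)
  have hp8 : p % 8 = 1 := hp.of_dvd (dvd_mul_right 8 _)
  rcases eq_or_ne ℓ 2 with rfl | hℓ2
  · exact_mod_cast (ZMod.exists_sq_eq_two_iff (by omega)).mpr (Or.inl hp8)
  · rw [ZMod.exists_sq_eq_prime_iff_of_mod_four_eq_one (by omega) hℓ2,
      (ZMod.natCast_eq_natCast_iff _ _ _).mpr hpℓ, Nat.cast_one]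
    exact IsSquare.one

theorem Nat.infinite_setOf_prime_and_natCast_eq_and_natCast_eq {m n : ℕ} [NeZero m] [NeZero n]
    (hmn : m.Coprime n) {u : ZMod m} {v : ZMod n} (hu : IsUnit u) (hv : IsUnit v) :
    {p : ℕ | p.Prime ∧ (p : ZMod m) = u ∧ (p : ZMod n) = v}.Infinite := by
  let e := ZMod.chineseRemainder hmn
  have ha : IsUnit (e.symm (u, v)) := (Prod.isUnit_iff.mpr ⟨hu, hv⟩).map e.symm
  refine (infinite_setOfPred_prime_and_eq_mod ha).mono ?_
  rintro p ⟨hp, hpa⟩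
  refine ⟨hp, ?_⟩
  have h := congrArg e hpa
  rw [RingEquiv.apply_symm_apply, map_natCast] at h
  exact Prod.ext_iff.mp h

theorem infinitely_many_primes_residue_pattern_general (C : ℕ)
    (q : ℕ) (hq : Nat.Prime q) (hqodd : Odd q) (hqC : C < q) :
    {p : ℕ | Nat.Prime p ∧ p % 4 = 1 ∧
      (∀ z : ℤ, 1 ≤ z → z ≤ (C : ℤ) → IsQuadRes (p : ℤ) z) ∧
      IsQuadNonRes (p : ℤ) (q : ℤ)}.Infinite := by
  have := Fact.mk hq
  have hq2 : q ≠ 2 := by rintro rfl; exact not_odd_iff_even.mpr even_two hqodd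
  obtain ⟨b, hb⟩ := FiniteField.exists_nonsquare (F := ZMod q) (by rwa [ZMod.ringChar_zmod_n])
  have hb0 : b ≠ 0 := by rintro rfl; exact hb IsSquare.zero
  have hcop : (8 * C !).Coprime q :=
    (Nat.Coprime.pow_left 3 (coprime_two_left.mpr hqodd)).mul_left
      (hq.coprime_factorial_of_lt hqC).symm
  have : NeZero (8 * C !) := ⟨by positivity⟩
  refine (infinite_setOf_prime_and_natCast_eq_and_natCast_eq hcop isUnit_one hb0.isUnit).mono ?_
  rintro p ⟨hp, hpM, hpb⟩
  have := Fact.mk hp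
  have hp1 : p ≡ 1 [MOD 8 * C !] := by
    rwa [← ZMod.natCast_eq_natCast_iff, Nat.cast_one]
  have hp4 : p % 4 = 1 := by have := hp1.of_dvd (dvd_mul_right 8 _); unfold Nat.ModEq at this; omega
  have hCp : C < p := by
    by_contra! hpC
    have := hp1.of_dvd (dvd_mul_of_dvd_right (dvd_factorial hp.pos hpC) 8)
    simp [Nat.ModEq, Nat.mod_eq_of_lt hp.one_lt] at this
  refine ⟨hp, hp4, fun z hz1 hzC => ?_, ?_⟩
  · lift z to ℕ using by omega
    rw [isQuadRes_natCast_iff, Int.cast_natCast, Int.natCast_dvd_natCast]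
    exact ⟨fun h => absurd (le_of_dvd (by omega) h) (by omega),
      ZMod.isSquare_natCast_of_modEq_one hp1 (by omega)⟩
  · rw [isQuadNonRes_natCast_iff, Int.cast_natCast, Int.natCast_dvd_natCast,
      ZMod.exists_sq_eq_prime_iff_of_mod_four_eq_one hp4 hq2, hpb]
    refine ⟨fun h => hb0 ?_, hb⟩
    rw [← hpb, (prime_dvd_prime_iff_eq hp hq).mp h, ZMod.natCast_self]

/-- For every `C ≥ 1` and every odd prime `q > C`, there exist infinitely many
primes `p` with `p ≡ 1 (mod 4)`, every integer `1 ≤ z ≤ C` a quadratic residue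
mod `p`, and `q` a quadratic non-residue mod `p`. -/
theorem infinitely_many_primes_residue_pattern (C : ℕ) (hC : 1 ≤ C)
    (q : ℕ) (hq : Nat.Prime q) (hqodd : Odd q) (hqC : C < q) :
    {p : ℕ | Nat.Prime p ∧ p % 4 = 1 ∧
      (∀ z : ℤ, 1 ≤ z → z ≤ (C : ℤ) → IsQuadRes (p : ℤ) z) ∧
      IsQuadNonRes (p : ℤ) (q : ℤ)}.Infinite :=
  infinitely_many_primes_residue_pattern_general C q hq hqodd hqC
end

section
/- Let p ≥ 2 be an integer and let q, q' be integers. For an integer u, define the ℚ/ℤ-valued bilinear map λ_u on ℤ/pℤ by λ_u(a,b) = (−u·ā·b̄/p) + ℤ ∈ ℚ/ℤ, where ā, b̄ ∈ ℤ are any integer representatives of a, b (this is well defined). Suppose there exists an additive group isomorphism f : ℤ/pℤ → ℤ/pℤ such that λ_{q'}(f(a), f(b)) = λ_q(a,b) for all a, b ∈ ℤ/pℤ. Then there exists an integer n with q·q' ≡ n² (mod p). -/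
/-
Evaluating the isometry condition at `a = b = 1` gives `λ_{q'}(c, c) = λ_q(1, 1)` for
`c = f 1`, i.e. `q ≡ q'·c² (mod p)`; multiplying by `q'` exhibits `q·q' ≡ (q'·c)²`.
-/

/-- The model linking form of the `p/u`-surgery on a knot: the `ℚ/ℤ`-valued
bilinear map on `ℤ/pℤ` given by `λ_u(a,b) = -u·a·b/p + ℤ`, computed using the
canonical integer representatives (it is well defined on residue classes). -/
noncomputable def linkingForm (p : ℕ) (u : ℤ) (a b : ZMod p) : AddCircle (1 : ℚ) :=
  (((-u * (a.val : ℤ) * (b.val : ℤ) : ℤ) : ℚ) / (p : ℚ) : ℚ)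

theorem AddCircle.coe_intCast_div_eq_iff {p : ℕ} (hp : p ≠ 0) {x y : ℤ} :
    ((x / p : ℚ) : AddCircle (1 : ℚ)) = ((y / p : ℚ) : AddCircle (1 : ℚ)) ↔
      x ≡ y [ZMOD p] := by
  have hp' : (p : ℚ) ≠ 0 := by exact_mod_cast hp
  rw [← sub_eq_zero, ← AddCircle.coe_sub, AddCircle.coe_eq_zero_iff, Int.modEq_comm,
    Int.modEq_iff_dvd]
  refine exists_congr fun n => ?_
  rw [zsmul_one, div_sub_div_same, eq_div_iff hp', eq_comm, mul_comm]
  norm_cast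

theorem linkingForm_eq_linkingForm_iff {p : ℕ} (hp : p ≠ 0) {u v : ℤ} {a b c d : ZMod p} :
    linkingForm p u a b = linkingForm p v c d ↔
      u * a.val * b.val ≡ v * c.val * d.val [ZMOD p] := by
  rw [linkingForm, linkingForm, AddCircle.coe_intCast_div_eq_iff hp, neg_mul, neg_mul,
    neg_mul, neg_mul, Int.neg_modEq_neg]

/-- If the linking forms `λ_q` and `λ_{q'}` on `ℤ/pℤ` are equivalent via an
additive group isomorphism of `ℤ/pℤ`, then `q·q'` is a square mod `p`. -/
theorem linking_form_iso_implies_square (p : ℕ) (hp : 2 ≤ p) (q q' : ℤ)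
    (f : ZMod p ≃+ ZMod p)
    (hf : ∀ a b : ZMod p, linkingForm p q' (f a) (f b) = linkingForm p q a b) :
    ∃ n : ℤ, q * q' ≡ n ^ 2 [ZMOD (p : ℤ)] := by
  have : Fact (1 < p) := ⟨hp⟩
  set c : ℤ := ((f 1).val : ℤ)
  have hq : q' * c * c ≡ q [ZMOD p] := by
    have h11 := (linkingForm_eq_linkingForm_iff (by omega)).mp (hf 1 1)
    rwa [ZMod.val_one, Nat.cast_one, mul_one, mul_one] at h11
  refine ⟨q' * c, ?_⟩
  calc q * q' ≡ q' * c * c * q' [ZMOD p] := (hq.mul_right q').symm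
    _ = (q' * c) ^ 2 := by ring
end
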